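/- Let X ⊆ ℓ^∞ contain the zero sequence and satisfy span(𝟏) + X ⊆ X. Then the set U_N(X) of nearly X-universal functions is nowhere dense in (C(ℝ), d_∞). -/

import Mathlib

open Filter Set

/-- The metric d_∞(f,g) = min(‖f−g‖_∞, 1) on functions ℝ → ℝ (value 1 if sup is infinite). -/
noncomputable def dinf (f g : ℝ → ℝ) : ℝ :=
  (min (⨆ x : ℝ, ENNReal.ofReal |f x - g x|) 1).toReal

/-- x is a bounded sequence, i.e. x ∈ ℓ^∞. -/
def Bdd (x : ℕ → ℝ) : Prop := ∃ C : ℝ, ∀ n : ℕ, |x n| ≤ C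

/-- sup_n |f(t+n) − x_n|, computed in ℝ≥0∞. -/
noncomputable def gapSup (f : ℝ → ℝ) (x : ℕ → ℝ) (t : ℝ) : ENNReal :=
  ⨆ n : ℕ, ENNReal.ofReal |f (t + n) - x n|

/-- f ∈ U(X): f is an X-universal interpolating function. -/
def memU (X : Set (ℕ → ℝ)) (f : ℝ → ℝ) : Prop :=
  Continuous f ∧ ∀ x ∈ X, ∃ t : ℝ, ∀ n : ℕ, f (t + n) = x n

/-- f ∈ U_N(X): f is nearly X-universal. -/
def memUN (X : Set (ℕ → ℝ)) (f : ℝ → ℝ) : Prop :=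
  Continuous f ∧ ∀ x ∈ X, (⨅ t : ℝ, gapSup f x t) = 0

/-- f is piecewise affine with locally finitely many breakpoints. -/
def PWAffine (f : ℝ → ℝ) : Prop :=
  ∃ z : ℤ → ℝ, StrictMono z ∧ Tendsto z atTop atTop ∧ Tendsto z atBot atBot ∧
    ∀ n : ℤ, ∃ a b : ℝ, ∀ x ∈ Set.Icc (z n) (z (n + 1)), f x = a * x + b

/-- span(𝟏): the set of constant sequences. -/
def spanOne : Set (ℕ → ℝ) := {x | ∃ c : ℝ, x = fun _ => c}

/-- dist(x, span(𝟏)) computed in ℝ≥0∞. -/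
noncomputable def distSpanOne (x : ℕ → ℝ) : ENNReal :=
  ⨅ c : ℝ, ⨆ n : ℕ, ENNReal.ofReal |x n - c|

/-!
Since `0 ∈ X`, every `h ∈ U_N(X)` satisfies `inf_t sup_n |h(t+n)| = 0`. A function `g` with
`sup_n |g(t+n)| ≥ e` for every `t` keeps this property, with `e/2`, under perturbations of
sup-distance `< e/2`, so it suffices to move an arbitrary `f` by `2e` to such a `g`.

For every `t` the progression `t + ℕ` meets `[6j, 6j+1]` and `[6j+3, 6j+4]` at the same phase
`θ = fract t` once `6j ≥ ⌊t⌋`. The samples `θ ↦ (f(6j+θ), f(6j+3+θ))` form a plane curve; after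
moving it by `e` so that it misses the origin (a polynomial approximation of the first
coordinate has finitely many zeros, and a generic constant shift of the second coordinate avoids
its values there), a radial push puts it outside the `e`-ball of the sup norm, so at each phase
one of the two samples has modulus `≥ e`. The corrections on the blocks `[3k, 3k+1]` are glued
by translates of a trapezoidal bump with pairwise disjoint supports.
-/

noncomputable def trapezoid (y : ℝ) : ℝ := max 0 (min 1 (min (2 * y + 1) (3 - 2 * y)))

lemma continuous_trapezoid : Continuous trapezoid := by
  unfold trapezoid; fun_prop

lemma trapezoid_nonneg (y : ℝ) : 0 ≤ trapezoid y := le_max_left _ _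

lemma trapezoid_le_one (y : ℝ) : trapezoid y ≤ 1 := max_le zero_le_one (min_le_left _ _)

lemma trapezoid_of_mem {y : ℝ} (hy : y ∈ Icc (0 : ℝ) 1) : trapezoid y = 1 := by
  unfold trapezoid
  rw [min_eq_left (le_min (by linarith [hy.1]) (by linarith [hy.2])), max_eq_right zero_le_one]

lemma trapezoid_of_not_mem {y : ℝ} (hy : y ∉ Ioo (-1 / 2 : ℝ) (3 / 2)) : trapezoid y = 0 := by
  rw [mem_Ioo, not_and_or, not_lt, not_lt] at hy
  refine max_eq_left ((min_le_right _ _).trans ?_)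
  rcases hy with hy | hy
  · exact (min_le_left _ _).trans (by linarith)
  · exact (min_le_right _ _).trans (by linarith)

noncomputable def localBump (D : ℝ → ℝ) (x : ℝ) : ℝ :=
  trapezoid x * D (projIcc 0 1 zero_le_one x)

section localBump

variable {D : ℝ → ℝ}

lemma continuous_localBump (hD : Continuous D) : Continuous (localBump D) :=
  continuous_trapezoid.mul (hD.comp (continuous_subtype_val.comp continuous_projIcc))

lemma localBump_of_mem {x : ℝ} (hx : x ∈ Icc (0 : ℝ) 1) : localBump D x = D x := by
  rw [localBump, trapezoid_of_mem hx, projIcc_of_mem _ hx, one_mul]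

lemma localBump_of_not_mem {x : ℝ} (hx : x ∉ Ioo (-1 / 2 : ℝ) (3 / 2)) : localBump D x = 0 := by
  rw [localBump, trapezoid_of_not_mem hx, zero_mul]

lemma abs_localBump_le {c : ℝ} (hD : ∀ θ ∈ Icc (0 : ℝ) 1, |D θ| ≤ c) (x : ℝ) :
    |localBump D x| ≤ c := by
  have hc : |D (projIcc 0 1 zero_le_one x)| ≤ c := hD _ (projIcc 0 1 zero_le_one x).2
  rw [localBump, abs_mul, abs_of_nonneg (trapezoid_nonneg x)]
  exact (mul_le_of_le_one_left (abs_nonneg _) (trapezoid_le_one x)).trans hc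

end localBump

noncomputable def bumpSeries (D : ℤ → ℝ → ℝ) (x : ℝ) : ℝ :=
  ∑ᶠ k : ℤ, localBump (D k) (x - 3 * k)

section bumpSeries

variable {D : ℤ → ℝ → ℝ}

lemma eq_of_sub_three_mul_mem_Ioo {x : ℝ} {k l : ℤ} (hk : x - 3 * k ∈ Ioo (-1 / 2 : ℝ) (3 / 2))
    (hl : x - 3 * l ∈ Ioo (-1 / 2 : ℝ) (3 / 2)) : k = l := by
  have hkl : k < l + 1 := by exact_mod_cast (by linarith [hk.1, hl.2] : (k : ℝ) < l + 1)
  have hlk : l < k + 1 := by exact_mod_cast (by linarith [hl.1, hk.2] : (l : ℝ) < k + 1)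
  omega

lemma continuous_bumpSeries (hD : ∀ k, Continuous (D k)) : Continuous (bumpSeries D) := by
  refine continuous_finsum (fun k => (continuous_localBump (hD k)).comp (by fun_prop)) ?_
  have hl : Tendsto (fun k : ℤ => 3 * (k : ℝ) + -1 / 2) atTop atTop :=
    tendsto_atTop_add_const_right _ _ (tendsto_intCast_atTop_atTop.const_mul_atTop three_pos)
  have hu : Tendsto (fun k : ℤ => 3 * (k : ℝ) + 3 / 2) atBot atBot :=
    tendsto_atBot_add_const_right _ _
      ((tendsto_intCast_atBot_iff.mpr tendsto_id).const_mul_atBot three_pos)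
  refine (locallyFinite_Ioo_of_tendsto hl hu).subset fun k x hx => ?_
  by_contra hmem
  refine hx (localBump_of_not_mem fun h => hmem ⟨?_, ?_⟩)
  · linarith [h.1]
  · linarith [h.2]

lemma bumpSeries_eq {x : ℝ} {k : ℤ} (hk : x - 3 * k ∈ Ioo (-1 / 2 : ℝ) (3 / 2)) :
    bumpSeries D x = localBump (D k) (x - 3 * k) :=
  finsum_eq_single _ k fun _ hl =>
    localBump_of_not_mem fun h => hl (eq_of_sub_three_mul_mem_Ioo h hk)

lemma bumpSeries_three_mul_add (k : ℤ) {θ : ℝ} (hθ : θ ∈ Icc (0 : ℝ) 1) :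
    bumpSeries D (3 * k + θ) = D k θ := by
  have hsub : 3 * (k : ℝ) + θ - 3 * k = θ := by ring
  rw [bumpSeries_eq (by rw [hsub]; constructor <;> linarith [hθ.1, hθ.2]), hsub,
    localBump_of_mem hθ]

lemma abs_bumpSeries_le {c : ℝ} (hD : ∀ k, ∀ θ ∈ Icc (0 : ℝ) 1, |D k θ| ≤ c) (x : ℝ) :
    |bumpSeries D x| ≤ c := by
  by_cases hx : ∃ k : ℤ, x - 3 * k ∈ Ioo (-1 / 2 : ℝ) (3 / 2)
  · obtain ⟨k, hk⟩ := hx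
    rw [bumpSeries_eq hk]
    exact abs_localBump_le (hD k) _
  · push Not at hx
    rw [bumpSeries, finsum_eq_zero_of_forall_eq_zero fun k => localBump_of_not_mem (hx k),
      abs_zero]
    exact (abs_nonneg _).trans (hD 0 0 (left_mem_Icc.mpr zero_le_one))

end bumpSeries

lemma exists_continuous_near_eq_on_blocks {f : ℝ → ℝ} (hf : Continuous f) {V : ℤ → ℝ → ℝ}
    (hV : ∀ k, Continuous (V k)) {c : ℝ}
    (hVf : ∀ k, ∀ θ ∈ Icc (0 : ℝ) 1, |V k θ - f (3 * k + θ)| ≤ c) :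
    ∃ g : ℝ → ℝ, Continuous g ∧ (∀ x, |g x - f x| ≤ c) ∧
      ∀ k : ℤ, ∀ θ ∈ Icc (0 : ℝ) 1, g (3 * k + θ) = V k θ := by
  set D : ℤ → ℝ → ℝ := fun k θ => V k θ - f (3 * k + θ)
  refine ⟨fun x => f x + bumpSeries D x,
    hf.add (continuous_bumpSeries fun k => (hV k).sub (by fun_prop)), fun x => ?_,
    fun k θ hθ => ?_⟩
  · rw [add_sub_cancel_left]
    exact abs_bumpSeries_le hVf x
  · simp only [bumpSeries_three_mul_add k hθ, D, add_sub_cancel]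

lemma exists_continuous_near_finite_zeros {F : ℝ → ℝ} {a b : ℝ} (hF : ContinuousOn F (Icc a b))
    {e : ℝ} (he : 0 < e) :
    ∃ P : ℝ → ℝ, Continuous P ∧ (∀ θ ∈ Icc a b, |P θ - F θ| ≤ e) ∧ {θ | P θ = 0}.Finite := by
  obtain ⟨p, hp⟩ := exists_polynomial_near_of_continuousOn a b F hF (e / 2) (half_pos he)
  obtain ⟨c, hc, hpc⟩ : ∃ c : ℝ, |c| ≤ e / 2 ∧ p - Polynomial.C c ≠ 0 := by
    by_cases hpe : p = Polynomial.C (e / 2)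
    · refine ⟨-(e / 2), by rw [abs_neg, abs_of_pos (half_pos he)], ?_⟩
      rw [hpe, ← Polynomial.C_sub, Ne, Polynomial.C_eq_zero]
      linarith
    · exact ⟨e / 2, (abs_of_pos (half_pos he)).le, sub_ne_zero.mpr hpe⟩
  refine ⟨fun θ => (p - Polynomial.C c).eval θ, (p - Polynomial.C c).continuous,
    fun θ hθ => ?_, Polynomial.finite_setOfPred_isRoot hpc⟩
  have hsplit : (p - Polynomial.C c).eval θ - F θ = (p.eval θ - F θ) - c := by
    simp only [Polynomial.eval_sub, Polynomial.eval_C]; ring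
  rw [hsplit]
  linarith [abs_sub (p.eval θ - F θ) c, hp θ hθ]

lemma exists_continuous_near_ne_zero {γ : ℝ → ℝ × ℝ} (hγ : Continuous γ) (a b : ℝ) {e : ℝ}
    (he : 0 < e) :
    ∃ η : ℝ → ℝ × ℝ, Continuous η ∧ (∀ θ ∈ Icc a b, ‖η θ - γ θ‖ ≤ e) ∧ ∀ θ, η θ ≠ 0 := by
  obtain ⟨P, hP, hPγ, hZ⟩ :=
    exists_continuous_near_finite_zeros (hγ.fst.continuousOn (s := Icc a b)) he
  obtain ⟨c, hc, hcZ⟩ := ((Icc_infinite (by linarith : -e < e)).sdiff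
    (hZ.image fun θ => (γ θ).2)).nonempty
  refine ⟨fun θ => (P θ, (γ θ).2 - c), hP.prodMk (hγ.snd.sub continuous_const),
    fun θ hθ => ?_, fun θ hθ => hcZ ⟨θ, ?_, ?_⟩⟩
  · rw [Prod.norm_def]
    refine max_le (hPγ θ hθ) ?_
    simpa [abs_le] using hc
  · exact congrArg Prod.fst hθ
  · simpa [sub_eq_zero] using congrArg Prod.snd hθ

lemma exists_continuous_near_norm_ge {α E : Type*} [TopologicalSpace α] [NormedAddCommGroup E]
    [NormedSpace ℝ E] {η : α → E} (hη : Continuous η) (hη0 : ∀ x, η x ≠ 0) {e : ℝ}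
    (he : 0 ≤ e) :
    ∃ η' : α → E, Continuous η' ∧ ∀ x, ‖η' x - η x‖ ≤ e ∧ e ≤ ‖η' x‖ := by
  refine ⟨fun x => (max ‖η x‖ e / ‖η x‖) • η x,
    ((hη.norm.max continuous_const).div hη.norm fun x => norm_ne_zero_iff.mpr (hη0 x)).smul hη,
    fun x => ?_⟩
  have hpos : 0 < ‖η x‖ := norm_pos_iff.mpr (hη0 x)
  have hmax : ‖η x‖ ≤ max ‖η x‖ e := le_max_left _ _
  have hsub : (max ‖η x‖ e / ‖η x‖) • η x - η x = ((max ‖η x‖ e - ‖η x‖) / ‖η x‖) • η x := by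
    rw [sub_div, div_self hpos.ne', sub_smul, one_smul]
  refine ⟨?_, ?_⟩
  · rw [hsub, norm_smul, Real.norm_of_nonneg (div_nonneg (by linarith) hpos.le),
      div_mul_cancel₀ _ hpos.ne']
    linarith [max_le_add_of_nonneg (norm_nonneg (η x)) he]
  · rw [norm_smul, Real.norm_of_nonneg (div_nonneg (by linarith) hpos.le),
      div_mul_cancel₀ _ hpos.ne']
    exact le_max_right _ _

lemma exists_continuous_near_outside_ball {γ : ℝ → ℝ × ℝ} (hγ : Continuous γ) (a b : ℝ) {e : ℝ}
    (he : 0 < e) :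
    ∃ γ' : ℝ → ℝ × ℝ, Continuous γ' ∧ ∀ θ ∈ Icc a b, ‖γ' θ - γ θ‖ ≤ 2 * e ∧ e ≤ ‖γ' θ‖ := by
  obtain ⟨η, hη, hηγ, hη0⟩ := exists_continuous_near_ne_zero hγ a b he
  obtain ⟨γ', hγ', hγ'η⟩ := exists_continuous_near_norm_ge hη hη0 he.le
  refine ⟨γ', hγ', fun θ hθ => ⟨?_, (hγ'η θ).2⟩⟩
  calc ‖γ' θ - γ θ‖ ≤ ‖γ' θ - η θ‖ + ‖η θ - γ θ‖ := norm_sub_le_norm_sub_add_norm_sub _ _ _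
    _ ≤ 2 * e := by linarith [(hγ'η θ).1, hηγ θ hθ]

lemma exists_nat_add_eq_add_fract {t : ℝ} {m : ℤ} (hm : ⌊t⌋ ≤ m) :
    ∃ n : ℕ, t + n = m + Int.fract t := by
  refine ⟨(m - ⌊t⌋).toNat, ?_⟩
  have hcast : (((m - ⌊t⌋).toNat : ℤ) : ℝ) = m - ⌊t⌋ := by
    rw [Int.toNat_of_nonneg (by omega)]; push_cast; ring
  rw [← Int.cast_natCast, hcast, Int.fract]
  ring

noncomputable def interleave (W : ℤ → ℝ → ℝ × ℝ) (k : ℤ) (θ : ℝ) : ℝ :=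
  if Even k then (W (k / 2) θ).1 else (W (k / 2) θ).2

section interleave

variable {W : ℤ → ℝ → ℝ × ℝ}

lemma interleave_two_mul (j : ℤ) : interleave W (2 * j) = fun θ => (W j θ).1 := by
  funext θ
  simp [interleave]

lemma interleave_two_mul_add_one (j : ℤ) : interleave W (2 * j + 1) = fun θ => (W j θ).2 := by
  funext θ
  simp only [interleave, Int.not_even_two_mul_add_one, if_false]
  rw [show (2 * j + 1) / 2 = j by omega]

lemma continuous_interleave (hW : ∀ j, Continuous (W j)) (k : ℤ) :
    Continuous (interleave W k) := by
  obtain ⟨j, rfl | rfl⟩ := Int.even_or_odd' k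
  · rw [interleave_two_mul]; exact (hW j).fst
  · rw [interleave_two_mul_add_one]; exact (hW j).snd

end interleave

lemma exists_continuous_near_escaping_zero {f : ℝ → ℝ} (hf : Continuous f) {e : ℝ} (he : 0 < e) :
    ∃ g : ℝ → ℝ, Continuous g ∧ (∀ x, |g x - f x| ≤ 2 * e) ∧ ∀ t, ∃ n : ℕ, e ≤ |g (t + n)| := by
  set γ : ℤ → ℝ → ℝ × ℝ := fun j θ => (f (6 * j + θ), f (6 * j + 3 + θ))
  choose γ' hγ' hγ'γ using fun j =>
    exists_continuous_near_outside_ball (γ := γ j) (by fun_prop) 0 1 he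
  have hVf : ∀ k, ∀ θ ∈ Icc (0 : ℝ) 1, |interleave γ' k θ - f (3 * k + θ)| ≤ 2 * e := by
    intro k θ hθ
    obtain ⟨j, rfl | rfl⟩ := Int.even_or_odd' k
    · calc |interleave γ' (2 * j) θ - f (3 * ↑(2 * j) + θ)| = ‖(γ' j θ - γ j θ).1‖ := by
            simp only [interleave_two_mul, Prod.fst_sub, Real.norm_eq_abs, γ]
            push_cast; ring_nf
        _ ≤ 2 * e := (norm_fst_le _).trans (hγ'γ j θ hθ).1
    · calc |interleave γ' (2 * j + 1) θ - f (3 * ↑(2 * j + 1) + θ)| = ‖(γ' j θ - γ j θ).2‖ := by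
            simp only [interleave_two_mul_add_one, Prod.snd_sub, Real.norm_eq_abs, γ]
            push_cast; ring_nf
        _ ≤ 2 * e := (norm_snd_le _).trans (hγ'γ j θ hθ).1
  obtain ⟨g, hg, hgf, hgV⟩ := exists_continuous_near_eq_on_blocks hf (continuous_interleave hγ') hVf
  refine ⟨g, hg, hgf, fun t => ?_⟩
  obtain ⟨j, hj⟩ : ∃ j : ℤ, ⌊t⌋ ≤ 6 * j :=
    ⟨|⌊t⌋|, by linarith [le_abs_self ⌊t⌋, abs_nonneg ⌊t⌋]⟩
  have hθ : Int.fract t ∈ Icc (0 : ℝ) 1 := ⟨Int.fract_nonneg t, (Int.fract_lt_one t).le⟩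
  obtain ⟨n₁, hn₁⟩ := exists_nat_add_eq_add_fract (t := t) (m := 3 * (2 * j)) (by omega)
  obtain ⟨n₂, hn₂⟩ := exists_nat_add_eq_add_fract (t := t) (m := 3 * (2 * j + 1)) (by omega)
  rcases le_max_iff.mp (hγ'γ j _ hθ).2 with h | h
  · refine ⟨n₁, ?_⟩
    rw [hn₁, Int.cast_mul, Int.cast_ofNat, hgV _ _ hθ, interleave_two_mul]
    exact h
  · refine ⟨n₂, ?_⟩
    rw [hn₂, Int.cast_mul, Int.cast_ofNat, hgV _ _ hθ, interleave_two_mul_add_one]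
    exact h

lemma dinf_le_of_forall_abs_sub_le {f g : ℝ → ℝ} {c : ℝ} (h : ∀ x, |f x - g x| ≤ c) :
    dinf f g ≤ c :=
  ENNReal.toReal_le_of_le_ofReal ((abs_nonneg _).trans (h 0))
    ((min_le_left _ _).trans (iSup_le fun x => ENNReal.ofReal_le_ofReal (h x)))

lemma abs_sub_lt_of_dinf_lt {f g : ℝ → ℝ} {δ : ℝ} (h : dinf f g < δ) (hδ : δ ≤ 1) (x : ℝ) :
    |f x - g x| < δ := by
  unfold dinf at h
  set S := ⨆ x, ENNReal.ofReal |f x - g x|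
  have hS : S < 1 := by
    by_contra! hS
    rw [min_eq_right hS, ENNReal.toReal_one] at h
    linarith
  rw [min_eq_left hS.le] at h
  calc |f x - g x| = (ENNReal.ofReal |f x - g x|).toReal :=
        (ENNReal.toReal_ofReal (abs_nonneg _)).symm
    _ ≤ S.toReal := ENNReal.toReal_mono (hS.trans ENNReal.one_lt_top).ne
        (le_iSup (fun x => ENNReal.ofReal |f x - g x|) x)
    _ < δ := h

lemma not_memUN_of_forall_exists_le_abs {X : Set (ℕ → ℝ)} (h0 : (fun _ => (0 : ℝ)) ∈ X)
    {h : ℝ → ℝ} {e : ℝ} (he : 0 < e) (hesc : ∀ t, ∃ n : ℕ, e ≤ |h (t + n)|) : ¬ memUN X h := by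
  rintro ⟨-, hUN⟩
  have hlow : ENNReal.ofReal e ≤ ⨅ t, gapSup h (fun _ => 0) t := by
    refine le_iInf fun t => ?_
    obtain ⟨n, hn⟩ := hesc t
    exact le_iSup_of_le n (ENNReal.ofReal_le_ofReal (by rwa [sub_zero]))
  rw [hUN _ h0, nonpos_iff_eq_zero, ENNReal.ofReal_eq_zero] at hlow
  linarith

theorem stmt8_general (X : Set (ℕ → ℝ))
    (h0 : (fun _ => (0 : ℝ)) ∈ X) :
    ∀ f : ℝ → ℝ, Continuous f → ∀ ε > (0 : ℝ),
      ∃ g : ℝ → ℝ, Continuous g ∧ dinf f g < ε ∧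
        ∃ δ > (0 : ℝ), ∀ h : ℝ → ℝ, Continuous h → dinf g h < δ → ¬ memUN X h := by
  intro f hf ε hε
  set e := min ε 1 / 4 with he_def
  have he : 0 < e := by positivity
  have hεe : 2 * e < ε := by linarith [min_le_left ε 1, he_def]
  have he1 : e / 2 ≤ 1 := by linarith [min_le_right ε 1, he_def]
  obtain ⟨g, hg, hgf, hesc⟩ := exists_continuous_near_escaping_zero hf he
  refine ⟨g, hg, ?_, e / 2, half_pos he, fun h _ hgh => ?_⟩
  · exact (dinf_le_of_forall_abs_sub_le fun x => (abs_sub_comm _ _).trans_le (hgf x)).trans_lt hεe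
  · refine not_memUN_of_forall_exists_le_abs h0 (half_pos he) fun t => ?_
    obtain ⟨n, hn⟩ := hesc t
    refine ⟨n, ?_⟩
    linarith [abs_sub_lt_of_dinf_lt hgh he1 (t + n), abs_sub_abs_le_abs_sub (g (t + n)) (h (t + n))]

/-- U_N(X) is nowhere dense in (C(ℝ), d_∞). -/
theorem stmt8 (X : Set (ℕ → ℝ)) (hX : ∀ x ∈ X, Bdd x)
    (h0 : (fun _ => (0 : ℝ)) ∈ X)
    (hspan : ∀ c : ℝ, ∀ x ∈ X, (fun n => c + x n) ∈ X) :
    ∀ f : ℝ → ℝ, Continuous f → ∀ ε > (0 : ℝ),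
      ∃ g : ℝ → ℝ, Continuous g ∧ dinf f g < ε ∧
        ∃ δ > (0 : ℝ), ∀ h : ℝ → ℝ, Continuous h → dinf g h < δ → ¬ memUN X h :=
  stmt8_general X h0
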